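/- Let μ > 1 and let z = (z₁, z₂) ∈ Ω̃. Then |z₁| = 2|φ̃₁(z)|^μ and ρ̃(z) = 4|φ̃₁(z)|^μ (|φ̃₁(z)|^μ - cos(log |φ̃₂(z)|²)). -/

import Mathlib

open MeasureTheory

/-- `log^t(z)`: the branch of the logarithm of `z` whose imaginary part lies in
`[log t², log t² + 2π)`. -/
noncomputable def logT (t : ℝ) (z : ℂ) : ℂ :=
  Complex.log z +
    ((2 * Real.pi * (⌈(Real.log (t ^ 2) - (Complex.log z).im) / (2 * Real.pi)⌉ : ℤ) : ℝ) : ℂ) *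
      Complex.I

/-- `ρ̃(z) = |z₁ + e^{i log|z₂|²}|² - 1`. -/
noncomputable def rhoT (z : ℂ × ℂ) : ℝ :=
  ‖z.1 + Complex.exp (Complex.I * (Real.log (‖z.2‖ ^ 2) : ℂ))‖ ^ 2 - 1

/-- `Ω̃ = {z ∈ ℂ × (ℂ∖{0}) : ρ̃(z) < 0}`. -/
def OmegaT : Set (ℂ × ℂ) := {z | z.2 ≠ 0 ∧ rhoT z < 0}

/-- `φ̃(z) = (exp((log^{|z₂|}(z₁) - log 2)/μ), z₂ exp(½(π + i log^{|z₂|}(z₁))))`. -/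
noncomputable def phiT (μ : ℝ) (z : ℂ × ℂ) : ℂ × ℂ :=
  (Complex.exp ((logT ‖z.2‖ z.1 - (Real.log 2 : ℂ)) / (μ : ℂ)),
   z.2 * Complex.exp (((Real.pi : ℂ) + Complex.I * logT ‖z.2‖ z.1) / 2))

/-- The Reinhardt domain
`D_μ = {w ∈ ℂ² : 0 < |w₁| < 1 and |log |w₂|²| < arccos(|w₁|^μ)}`. -/
def Dset (μ : ℝ) : Set (ℂ × ℂ) :=
  {w | 0 < ‖w.1‖ ∧ ‖w.1‖ < 1 ∧
    |Real.log (‖w.2‖ ^ 2)| < Real.arccos (‖w.1‖ ^ μ)}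
/-! On `Ω̃`, `z₁ = exp L` with `L = log^{|z₂|}(z₁)`, and `φ̃` is built from `L`: `|φ̃₁|^μ = e^{Re L}/2 = |z₁|/2`,
while `log |φ̃₂|² = log |z₂|² + π - Im L`. Expanding `ρ̃ = |e^L + e^{iθ}|² - 1` with `θ = log |z₂|²` gives
`|z₁|² + 2|z₁| cos(Im L - θ)`, and `cos(π - x) = -cos x` turns this into the claimed formula. -/

open Complex

lemma exp_logT {t : ℝ} {z : ℂ} (hz : z ≠ 0) : exp (logT t z) = z := by
  set k : ℤ := ⌈(Real.log (t ^ 2) - (log z).im) / (2 * Real.pi)⌉ with hk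
  rw [logT, ← hk, exp_add, exp_log hz,
    show ((2 * Real.pi * (k : ℝ) : ℝ) : ℂ) * I = (k : ℂ) * (2 * Real.pi * I) by push_cast; ring,
    exp_int_mul_two_pi_mul_I, mul_one]

lemma logT_re (t : ℝ) (z : ℂ) : (logT t z).re = Real.log ‖z‖ := by
  simp [logT, log_re]

lemma norm_exp_add_exp_mul_I_sq (w : ℂ) (θ : ℝ) :
    ‖exp w + exp (I * θ)‖ ^ 2 = ‖exp w‖ ^ 2 + 2 * ‖exp w‖ * Real.cos (w.im - θ) + 1 := by
  have hθ : ‖exp (I * θ)‖ = 1 := by rw [mul_comm]; exact norm_exp_ofReal_mul_I θ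
  rw [Complex.sq_norm, normSq_add, ← Complex.sq_norm, ← Complex.sq_norm, hθ, ← exp_conj, ← exp_add,
    exp_re, norm_exp]
  simp only [add_re, add_im, conj_re, conj_im, mul_re, mul_im, I_re, I_im, ofReal_re, ofReal_im]
  ring_nf

lemma rhoT_of_fst_eq_zero {z : ℂ × ℂ} (h : z.1 = 0) : rhoT z = 0 := by
  rw [rhoT, h, zero_add, mul_comm, norm_exp_ofReal_mul_I]
  norm_num

lemma fst_ne_zero_of_mem_OmegaT {z : ℂ × ℂ} (hz : z ∈ OmegaT) : z.1 ≠ 0 :=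
  fun h => (rhoT_of_fst_eq_zero h).not_lt hz.2

lemma rhoT_eq_of_fst_ne_zero {z : ℂ × ℂ} (hz : z.1 ≠ 0) :
    rhoT z = ‖z.1‖ ^ 2 +
      2 * ‖z.1‖ * Real.cos ((logT ‖z.2‖ z.1).im - Real.log (‖z.2‖ ^ 2)) := by
  rw [rhoT, ← exp_logT (t := ‖z.2‖) hz, norm_exp_add_exp_mul_I_sq, exp_logT hz]
  ring

lemma norm_fst_phiT_rpow {μ : ℝ} (hμ : μ ≠ 0) {z : ℂ × ℂ} (hz : z.1 ≠ 0) :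
    ‖(phiT μ z).1‖ ^ μ = ‖z.1‖ / 2 := by
  rw [phiT, norm_exp, div_ofReal_re, sub_re, ofReal_re, logT_re, ← Real.exp_mul,
    div_mul_cancel₀ _ hμ, Real.exp_sub, Real.exp_log (norm_pos_iff.mpr hz),
    Real.exp_log two_pos]

lemma log_sq_norm_snd_phiT (μ : ℝ) {z : ℂ × ℂ} (hz : z.2 ≠ 0) :
    Real.log (‖(phiT μ z).2‖ ^ 2) =
      Real.log (‖z.2‖ ^ 2) + Real.pi - (logT ‖z.2‖ z.1).im := by
  have hre : (((Real.pi : ℂ) + I * logT ‖z.2‖ z.1) / 2).re =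
      (Real.pi - (logT ‖z.2‖ z.1).im) / 2 := by
    simp only [div_ofNat_re, add_re, ofReal_re, mul_re, I_re, I_im]
    ring
  rw [phiT, norm_mul, norm_exp, hre, mul_pow,
    Real.log_mul (by positivity) (by positivity), ← Real.exp_nat_mul, Real.log_exp]
  push_cast
  ring

lemma cos_log_sq_norm_snd_phiT (μ : ℝ) {z : ℂ × ℂ} (hz : z.2 ≠ 0) :
    Real.cos (Real.log (‖(phiT μ z).2‖ ^ 2)) =
      -Real.cos ((logT ‖z.2‖ z.1).im - Real.log (‖z.2‖ ^ 2)) := by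
  rw [log_sq_norm_snd_phiT μ hz, ← Real.cos_pi_sub]
  ring_nf

theorem abs_z1_and_rho_in_terms_of_phiT (μ : ℝ) (hμ : 1 < μ) (z : ℂ × ℂ) (hz : z ∈ OmegaT) :
    ‖z.1‖ = 2 * ‖(phiT μ z).1‖ ^ μ ∧
    rhoT z = 4 * ‖(phiT μ z).1‖ ^ μ *
      (‖(phiT μ z).1‖ ^ μ - Real.cos (Real.log (‖(phiT μ z).2‖ ^ 2))) := by
  have hz1 := fst_ne_zero_of_mem_OmegaT hz
  have hφ₁ := norm_fst_phiT_rpow (by positivity) hz1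
  refine ⟨by rw [hφ₁]; ring, ?_⟩
  rw [rhoT_eq_of_fst_ne_zero hz1, hφ₁, cos_log_sq_norm_snd_phiT μ hz.1]
  ring
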